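/- arXiv:2405.14682 — 2 statements merged into one kernel-verified Lean document; each statement's English description precedes it below -/
import Mathlib

section
/- Let J be a 3×3 real matrix all of whose complex eigenvalues have negative real part, let d₁, d₂, d₃ > 0 be reals, and for y ≥ 0 set J(y) = J − y·diag(d₁, d₂, d₃). Then there exist 0 < y₀ < y₁ such that for every y ∈ [0, y₀] and every y ≥ y₁, all complex eigenvalues of J(y) have negative real part. -/
open Matrix Polynomial

/-- The multiset of complex eigenvalues of a real 3×3 matrix, i.e. the roots of its
characteristic polynomial regarded as a polynomial over `ℂ`. -/
noncomputable def eigs (M : Matrix (Fin 3) (Fin 3) ℝ) : Multiset ℂ :=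
  (M.charpoly.map (algebraMap ℝ ℂ)).roots

/-!
Routh–Hurwitz for cubics: all complex roots of a real cubic `X³ + aX² + bX + c` have negative
real part iff `a > 0`, `c > 0` and `ab > c`. These are strict inequalities between polynomial
functions of the matrix entries, so the stable `3 × 3` matrices form an open set. It contains `J`,
which gives stability of `J(y)` for small `y`, and it contains `-diag(d)`, hence also
`ε • J - diag(d)` for small `ε ≥ 0`. For large `y`, `J(y) = y • (y⁻¹ • J - diag(d))`, and
stability is invariant under positive scaling.

For the necessity of `c > 0` and `ab > c`: a monic real polynomial without roots in `[0, ∞)` is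
positive at `0` by the intermediate value theorem; apply this to the cubic itself and to the cubic
whose roots are the pairwise sums of its roots, whose constant term is `ab - c`.
-/

open Filter Set Topology

namespace Polynomial

def IsHurwitz (p : ℝ[X]) : Prop :=
  ∀ z ∈ (p.map (algebraMap ℝ ℂ)).roots, z.re < 0

theorem IsHurwitz.eval_zero_pos {p : ℝ[X]} (hp : p.Monic) (h : p.IsHurwitz) :
    0 < p.eval 0 := by
  have hne : ∀ x : ℝ, 0 ≤ x → p.eval x ≠ 0 := by
    intro x hx hpx
    have hroot : (x : ℂ) ∈ (p.map (algebraMap ℝ ℂ)).roots := by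
      rw [mem_roots (hp.map _).ne_zero, IsRoot, ← Complex.coe_algebraMap, eval_map_algebraMap,
        aeval_algebraMap_apply_eq_algebraMap_eval, hpx, map_zero]
    exact (h _ hroot).not_ge (by simpa using hx)
  rcases le_or_gt p.degree 0 with hdeg | hdeg
  · rw [eq_one_of_monic_natDegree_zero hp (natDegree_eq_zero_iff_degree_le_zero.2 hdeg)]
    simp
  obtain ⟨R, hR, hR0⟩ := ((p.tendsto_atTop_of_leadingCoeff_nonneg hdeg
    (by rw [hp.leadingCoeff]; exact zero_le_one)).eventually_gt_atTop 0 |>.and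
    (eventually_ge_atTop 0)).exists
  by_contra! h0
  obtain ⟨x, hx, hx0⟩ := intermediate_value_Icc hR0 p.continuous.continuousOn ⟨h0, hR.le⟩
  exact hne x hx.1 hx0

theorem isHurwitz_iff_of_map_eq_prod {p : ℝ[X]} {z₁ z₂ z₃ : ℂ}
    (h : p.map (algebraMap ℝ ℂ) = (X - C z₁) * (X - C z₂) * (X - C z₃)) :
    p.IsHurwitz ↔ z₁.re < 0 ∧ z₂.re < 0 ∧ z₃.re < 0 := by
  simp [IsHurwitz, h, roots_mul, X_sub_C_ne_zero, or_imp, forall_and]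

theorem exists_cubic_eq_prod (a b c : ℂ) :
    ∃ z₁ z₂ z₃ : ℂ, X ^ 3 + C a * X ^ 2 + C b * X + C c = (X - C z₁) * (X - C z₂) * (X - C z₃) := by
  have hp : (X ^ 3 + C a * X ^ 2 + C b * X + C c).Monic := by monicity!
  have hsplit := IsAlgClosed.splits (X ^ 3 + C a * X ^ 2 + C b * X + C c)
  have hcard : (X ^ 3 + C a * X ^ 2 + C b * X + C c).roots.card = 3 := by
    rw [splits_iff_card_roots.1 hsplit]; compute_degree!
  obtain ⟨z₁, z₂, z₃, hroots⟩ := Multiset.card_eq_three.1 hcard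
  refine ⟨z₁, z₂, z₃, ?_⟩
  conv_lhs => rw [hsplit.eq_prod_roots_of_monic hp, hroots]
  simp [mul_assoc]

theorem vieta_cubic {R : Type*} [CommRing R] {a b c z₁ z₂ z₃ : R}
    (h : X ^ 3 + C a * X ^ 2 + C b * X + C c = (X - C z₁) * (X - C z₂) * (X - C z₃)) :
    a = -(z₁ + z₂ + z₃) ∧ b = z₁ * z₂ + z₁ * z₃ + z₂ * z₃ ∧ c = -(z₁ * z₂ * z₃) := by
  have hexpand : (X - C z₁) * (X - C z₂) * (X - C z₃) = X ^ 3 + C (-(z₁ + z₂ + z₃)) * X ^ 2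
      + C (z₁ * z₂ + z₁ * z₃ + z₂ * z₃) * X + C (-(z₁ * z₂ * z₃)) := by
    simp only [C_neg, C_add, C_mul]; ring
  rw [hexpand] at h
  refine ⟨?_, ?_, ?_⟩
  · simpa [coeff_X, coeff_C, -map_neg, -map_add, -map_mul] using congrArg (coeff · 2) h
  · simpa [coeff_X, coeff_C, -map_neg, -map_add, -map_mul] using congrArg (coeff · 1) h
  · simpa [coeff_X, coeff_C, -map_neg, -map_add, -map_mul] using congrArg (coeff · 0) h

theorem re_neg_of_cubic_eq_zero {a b c : ℝ} (ha : 0 < a) (hc : 0 < c) (hab : c < a * b)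
    {z : ℂ} (hz : z ^ 3 + a * z ^ 2 + b * z + c = 0) : z.re < 0 := by
  have hb : 0 < b := by nlinarith
  obtain ⟨α, β⟩ := z
  have hre := congrArg Complex.re hz
  have him := congrArg Complex.im hz
  simp only [pow_succ, pow_zero, one_mul, Complex.mul_re, Complex.mul_im, Complex.add_re,
    Complex.add_im, Complex.ofReal_re, Complex.ofReal_im, Complex.zero_re, Complex.zero_im]
    at hre him ⊢
  by_contra! hα
  -- the imaginary part gives β = 0 or β² = 3α² + 2aα + b; either way the real part is positive
  rcases eq_or_ne β 0 with rfl | hβ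
  · nlinarith [pow_nonneg hα 3, mul_nonneg ha.le (mul_nonneg hα hα), mul_nonneg hb.le hα]
  · have him' : β * (3 * α ^ 2 - β ^ 2 + 2 * a * α + b) = 0 := by linear_combination him
    have hβ2 : β ^ 2 = 3 * α ^ 2 + 2 * a * α + b := by
      linarith [(mul_eq_zero.1 him').resolve_left hβ]
    nlinarith [pow_nonneg hα 3, mul_nonneg ha.le (mul_nonneg hα hα),
      mul_nonneg (by positivity : (0:ℝ) ≤ 2 * b + 2 * a ^ 2) hα]

theorem isHurwitz_cubic_iff (a b c : ℝ) :
    (X ^ 3 + C a * X ^ 2 + C b * X + C c).IsHurwitz ↔ 0 < a ∧ 0 < c ∧ c < a * b := by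
  have hmap : (X ^ 3 + C a * X ^ 2 + C b * X + C c).map (algebraMap ℝ ℂ) =
      X ^ 3 + C (a : ℂ) * X ^ 2 + C (b : ℂ) * X + C (c : ℂ) := by simp
  constructor
  · intro h
    obtain ⟨z₁, z₂, z₃, hprod⟩ := exists_cubic_eq_prod (a : ℂ) b c
    obtain ⟨hz₁, hz₂, hz₃⟩ := (isHurwitz_iff_of_map_eq_prod (hmap.trans hprod)).1 h
    obtain ⟨ha, hb, hc⟩ := vieta_cubic hprod
    -- the roots of this cubic are the pairwise sums z_i + z_j, and its constant term is ab - c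
    have hpairs : (X ^ 3 + C (2 * a) * X ^ 2 + C (a ^ 2 + b) * X + C (a * b - c)).IsHurwitz := by
      refine (isHurwitz_iff_of_map_eq_prod (z₁ := z₂ + z₃) (z₂ := z₁ + z₃) (z₃ := z₁ + z₂) ?_).2
        ⟨?_, ?_, ?_⟩
      · simp only [Polynomial.map_add, Polynomial.map_mul, Polynomial.map_pow, map_X, map_C,
          Complex.coe_algebraMap]
        push_cast
        rw [ha, hb, hc]
        simp only [C_neg, C_add, C_mul, C_sub, C_pow, C_ofNat]
        ring
      all_goals simp only [Complex.add_re]; linarith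
    refine ⟨?_, ?_, ?_⟩
    · have := congrArg Complex.re ha
      simp only [Complex.ofReal_re, Complex.neg_re, Complex.add_re] at this
      linarith
    · simpa using h.eval_zero_pos (by monicity!)
    · simpa using hpairs.eval_zero_pos (by monicity!)
  · rintro ⟨ha, hc, hab⟩ z hz
    rw [hmap, mem_roots (Monic.ne_zero (by monicity!))] at hz
    exact re_neg_of_cubic_eq_zero ha hc hab (by simpa using hz)

end Polynomial

namespace Matrix

variable {R : Type*} [CommRing R]

def principalMinorSum (M : Matrix (Fin 3) (Fin 3) R) : R :=
  M 0 0 * M 1 1 - M 0 1 * M 1 0 + M 0 0 * M 2 2 - M 0 2 * M 2 0 + M 1 1 * M 2 2 - M 1 2 * M 2 1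

theorem charpoly_fin_three (M : Matrix (Fin 3) (Fin 3) R) :
    M.charpoly = X ^ 3 + C (-M.trace) * X ^ 2 + C M.principalMinorSum * X + C (-M.det) := by
  rw [charpoly, det_fin_three, trace_fin_three, det_fin_three, principalMinorSum]
  simp only [charmatrix_apply_eq, charmatrix_apply_ne, ne_eq, Fin.reduceEq, not_false_eq_true,
    map_add, map_sub, map_mul, map_neg]
  ring

theorem principalMinorSum_smul (t : R) (M : Matrix (Fin 3) (Fin 3) R) :
    (t • M).principalMinorSum = t ^ 2 * M.principalMinorSum := by
  simp only [principalMinorSum, smul_apply, smul_eq_mul]; ring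

theorem isHurwitz_charpoly_iff (M : Matrix (Fin 3) (Fin 3) ℝ) :
    M.charpoly.IsHurwitz ↔ 0 < -M.trace ∧ 0 < -M.det ∧ -M.det < -M.trace * M.principalMinorSum := by
  rw [charpoly_fin_three, isHurwitz_cubic_iff]

theorem isOpen_setOf_isHurwitz_charpoly :
    IsOpen {M : Matrix (Fin 3) (Fin 3) ℝ | M.charpoly.IsHurwitz} := by
  have hminor : Continuous fun M : Matrix (Fin 3) (Fin 3) ℝ => M.principalMinorSum := by
    unfold principalMinorSum; fun_prop
  simp_rw [isHurwitz_charpoly_iff, ofPred_and]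
  exact (isOpen_lt continuous_const (by fun_prop)).inter
    ((isOpen_lt continuous_const (by fun_prop)).inter (isOpen_lt (by fun_prop) (by fun_prop)))

theorem isHurwitz_charpoly_smul {M : Matrix (Fin 3) (Fin 3) ℝ} (h : M.charpoly.IsHurwitz) {t : ℝ}
    (ht : 0 < t) : (t • M).charpoly.IsHurwitz := by
  rw [isHurwitz_charpoly_iff] at h ⊢
  obtain ⟨htr, hdet, hmin⟩ := h
  simp only [trace_smul, det_smul, principalMinorSum_smul, Fintype.card_fin, smul_eq_mul]
  refine ⟨by nlinarith, by nlinarith [pow_pos ht 3], ?_⟩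
  have := mul_lt_mul_of_pos_left hmin (pow_pos ht 3)
  linarith

theorem isHurwitz_charpoly_neg_diagonal {d₁ d₂ d₃ : ℝ} (hd₁ : 0 < d₁) (hd₂ : 0 < d₂)
    (hd₃ : 0 < d₃) : (-diagonal ![d₁, d₂, d₃]).charpoly.IsHurwitz := by
  rw [isHurwitz_charpoly_iff]
  simp only [principalMinorSum, trace_neg, det_neg, trace_diagonal, det_diagonal,
    Fin.sum_univ_three, Fin.prod_univ_three, neg_apply, diagonal_apply_eq, diagonal_apply_ne,
    ne_eq, Fin.reduceEq, not_false_eq_true, cons_val, Fintype.card_fin]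
  refine ⟨by linarith, by nlinarith [mul_pos (mul_pos hd₁ hd₂) hd₃], ?_⟩
  nlinarith [mul_pos (mul_pos (add_pos hd₁ hd₂) (add_pos hd₁ hd₃)) (add_pos hd₂ hd₃)]

end Matrix

theorem exists_forall_Icc_mem_of_isOpen {X : Type*} [TopologicalSpace X] {U : Set X}
    (hU : IsOpen U) {f : ℝ → X} (hf : ContinuousAt f 0) (h0 : f 0 ∈ U) :
    ∃ δ > 0, ∀ y ∈ Icc 0 δ, f y ∈ U :=
  mem_nhdsGE_iff_exists_Icc_subset.1
    (mem_nhdsWithin_of_mem_nhds (hf.preimage_mem_nhds (hU.mem_nhds h0)))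

theorem stable_for_small_and_large_y
    (J : Matrix (Fin 3) (Fin 3) ℝ) (d₁ d₂ d₃ : ℝ)
    (hd₁ : 0 < d₁) (hd₂ : 0 < d₂) (hd₃ : 0 < d₃)
    (hJ : ∀ z ∈ eigs J, z.re < 0) :
    ∃ y₀ y₁ : ℝ, 0 < y₀ ∧ y₀ < y₁ ∧
      ∀ y : ℝ, (y ∈ Set.Icc 0 y₀ ∨ y₁ ≤ y) →
        ∀ z ∈ eigs (J - y • Matrix.diagonal ![d₁, d₂, d₃]), z.re < 0 := by
  set D := diagonal ![d₁, d₂, d₃]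
  have hU := isOpen_setOf_isHurwitz_charpoly
  obtain ⟨y₀, hy₀, hsmall⟩ := exists_forall_Icc_mem_of_isOpen hU (f := fun y => J - y • D)
    (by fun_prop) (by rw [zero_smul, sub_zero]; exact hJ)
  obtain ⟨ε, hε, hlarge⟩ := exists_forall_Icc_mem_of_isOpen hU (f := fun ε => ε • J - D)
    (by fun_prop) (by rw [zero_smul, zero_sub]; exact isHurwitz_charpoly_neg_diagonal hd₁ hd₂ hd₃)
  refine ⟨y₀, y₀ + ε⁻¹, hy₀, by simpa using hε, ?_⟩
  rintro y (hy | hy)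
  · exact hsmall y hy
  · have hy_pos : 0 < y := by linarith [inv_pos.2 hε]
    have hrescale : J - y • D = y • (y⁻¹ • J - D) := by
      rw [smul_sub, smul_smul, mul_inv_cancel₀ hy_pos.ne', one_smul]
    rw [hrescale]
    exact isHurwitz_charpoly_smul
      (hlarge y⁻¹ ⟨inv_nonneg.2 hy_pos.le, inv_le_of_inv_le₀ hε (by linarith)⟩) hy_pos
end

section
/- Let J be a 3×3 real matrix all of whose complex eigenvalues have negative real part, let d₁, d₂, d₃ > 0 be reals, and for y ≥ 0 set J(y) = J − y·diag(d₁, d₂, d₃). Define ã₃ = −d₁d₂d₃; ã₂ = d₁d₂J₃₃ + d₂d₃J₁₁ + d₃d₁J₂₂; ã₁ = −[d₁(J₂₂J₃₃−J₂₃J₃₂) + d₂(J₃₃J₁₁−J₃₁J₁₃) + d₃(J₁₁J₂₂−J₁₂J₂₁)]; ã₀ = det J. Then the system admits a Turing instability if and only if it does not admit a Turing–Hopf instability and all three inequalities hold: 0 < ã₂² − 3ã₁ã₃; 0 < ã₂ + √(ã₂² − 3ã₁ã₃); and 0 < 2ã₂³ + 2(ã₂² − 3ã₁ã₃)^{3/2}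 − 9ã₁ã₂ã₃ + 27ã₀ã₃². -/
/-!
Write `det(λ - J(y)) = λ³ + a(y) λ² + b(y) λ + c(y)`, so that `c(y) = -det J(y)` is minus the
cubic `ã₃ y³ + ã₂ y² + ã₁ y + ã₀`. If `c(y) < 0`, the product `-c(y)` of the three roots is
positive, so one of them is real and positive. Conversely, suppose every unstable eigenvalue is real, some
`J(y₀)` has one, and yet `c ≥ 0` on `[0, ∞)`. The Hurwitz quantity `g = a b - c` is positive at
`0` (`J` is stable), negative at `y₀` (a real root `x > 0` with `a > 0`, `c ≥ 0` forces `b < 0`)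
and positive for large `y`, so `y₀` lies in an interval `(u, v)` on which `g < 0` and at whose ends
`g = 0`. A complex pair `α ± iβ` gives `g = -2α ((z + α)² + β²)`, so on `(u, v)` it would be
unstable; hence all roots are real there, the discriminant is `≥ 0` on `[u, v]`, and at `u`, `v`
two roots are opposite, which forces `c = a b ≤ 0`. Thus `u` and `v` are two double zeros of the
cubic `c`, which is impossible.

So a Turing instability means: no Turing–Hopf instability, and `ã₃ y³ + ã₂ y² + ã₁ y + ã₀ > 0`
for some `y > 0`. Since `ã₃ < 0` and `ã₀ = det J < 0`, this happens exactly when the cubic has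
a local maximum at a positive `y` with a positive value, which is what the three inequalities say.
-/

open Matrix Polynomial

/-- `Jmat J d₁ d₂ d₃ y = J - y • diag(d₁, d₂, d₃)`. -/
noncomputable def Jmat (J : Matrix (Fin 3) (Fin 3) ℝ) (d₁ d₂ d₃ y : ℝ) :
    Matrix (Fin 3) (Fin 3) ℝ :=
  J - y • Matrix.diagonal ![d₁, d₂, d₃]

open Filter Set ComplexConjugate

theorem tendsto_cubic_atTop {k p q r : ℝ} (hk : 0 < k) :
    Tendsto (fun y : ℝ ↦ k * y ^ 3 + p * y ^ 2 + q * y + r) atTop atTop := by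
  have horner : Tendsto (fun y : ℝ ↦ y * (y * (k * y + p) + q) + r) atTop atTop :=
    tendsto_atTop_add_const_right _ r <| tendsto_id.atTop_mul_atTop₀ <|
      tendsto_atTop_add_const_right _ q <| tendsto_id.atTop_mul_atTop₀ <|
        tendsto_atTop_add_const_right _ p <| tendsto_id.const_mul_atTop hk
  exact horner.congr fun y ↦ by ring

theorem tendsto_affine_mul_quadratic_add_cubic {a₀ a₁ b₀ b₁ b₂ t₀ t₁ t₂ t₃ : ℝ}
    (h : 0 < a₁ * b₂ + t₃) :
    Tendsto (fun y ↦ (a₀ + a₁ * y) * (b₀ + b₁ * y + b₂ * y ^ 2) +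
      (t₃ * y ^ 3 + t₂ * y ^ 2 + t₁ * y + t₀)) atTop atTop :=
  (tendsto_cubic_atTop (p := a₀ * b₂ + a₁ * b₁ + t₂) (q := a₀ * b₁ + a₁ * b₀ + t₁)
    (r := a₀ * b₀ + t₀) h).congr fun y ↦ by ring

theorem exists_cubic_eq_zero (a b c : ℝ) : ∃ x : ℝ, x ^ 3 + a * x ^ 2 + b * x + c = 0 := by
  have hcont : Continuous fun x : ℝ ↦ x ^ 3 + a * x ^ 2 + b * x + c := by fun_prop
  have htop := tendsto_cubic_atTop (k := 1) (p := a) (q := b) (r := c) one_pos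
  have hbot := (tendsto_neg_atTop_atBot.comp
    (tendsto_cubic_atTop (k := 1) (p := -a) (q := b) (r := -c) one_pos)).comp
      tendsto_neg_atBot_atTop
  exact hcont.surjective (by simpa using htop)
    (hbot.congr fun x ↦ by simp only [Function.comp_apply]; ring) 0

theorem hasDerivAt_cubic (t₃ t₂ t₁ t₀ x : ℝ) :
    HasDerivAt (fun y ↦ t₃ * y ^ 3 + t₂ * y ^ 2 + t₁ * y + t₀)
      (3 * t₃ * x ^ 2 + 2 * t₂ * x + t₁) x := by
  have h := ((((hasDerivAt_pow 3 x).const_mul t₃).add ((hasDerivAt_pow 2 x).const_mul t₂)).add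
    ((hasDerivAt_id' x).const_mul t₁)).add_const t₀
  exact h.congr_deriv (by push_cast; ring)

theorem eq_of_isLocalMax_cubic {t₃ t₂ t₁ t₀ u v : ℝ} (ht₃ : t₃ ≠ 0)
    (hu : IsLocalMax (fun y ↦ t₃ * y ^ 3 + t₂ * y ^ 2 + t₁ * y + t₀) u)
    (hv : IsLocalMax (fun y ↦ t₃ * y ^ 3 + t₂ * y ^ 2 + t₁ * y + t₀) v)
    (hu0 : t₃ * u ^ 3 + t₂ * u ^ 2 + t₁ * u + t₀ = 0)
    (hv0 : t₃ * v ^ 3 + t₂ * v ^ 2 + t₁ * v + t₀ = 0) : u = v := by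
  have hu' := hu.hasDerivAt_eq_zero (hasDerivAt_cubic t₃ t₂ t₁ t₀ u)
  have hv' := hv.hasDerivAt_eq_zero (hasDerivAt_cubic t₃ t₂ t₁ t₀ v)
  have h : t₃ * (u - v) ^ 3 = 0 := by
    linear_combination (u - v) * (hu' + hv') - 2 * (hu0 - hv0)
  simpa [ht₃, sub_eq_zero] using h

theorem exists_zero_forall_neg_Ioc {g : ℝ → ℝ} {a x : ℝ} (hax : a ≤ x)
    (hg : ContinuousOn g (Icc a x)) (ha : 0 < g a) (hx : g x < 0) :
    ∃ u ∈ Ioo a x, g u = 0 ∧ ∀ t ∈ Ioc u x, g t < 0 := by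
  have hS : IsCompact (Icc a x ∩ g ⁻¹' Ici 0) :=
    isCompact_Icc.of_isClosed_subset (hg.preimage_isClosed_of_isClosed isClosed_Icc isClosed_Ici)
      inter_subset_left
  obtain ⟨u, ⟨⟨hau, hux⟩, hgu⟩, hmax⟩ :=
    hS.exists_isGreatest ⟨a, left_mem_Icc.2 hax, ha.le⟩
  have hneg : ∀ t ∈ Ioc u x, g t < 0 := fun t ht ↦
    not_le.1 fun h ↦ ht.1.not_ge (hmax ⟨⟨hau.trans ht.1.le, ht.2⟩, h⟩)
  obtain ⟨t, ht, hgt⟩ :=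
    intermediate_value_Icc' hux (hg.mono (Icc_subset_Icc hau le_rfl)) ⟨hx.le, hgu⟩
  obtain rfl : t = u := le_antisymm (hmax ⟨⟨hau.trans ht.1, ht.2⟩, hgt.ge⟩) ht.1
  exact ⟨t, ⟨hau.lt_of_ne (by rintro rfl; linarith), hux.lt_of_ne (by rintro rfl; linarith)⟩,
    hgt, hneg⟩

theorem exists_Ioo_neg_zero_endpoints {g : ℝ → ℝ} (hg : Continuous g) {a x b : ℝ} (hax : a ≤ x)
    (hxb : x ≤ b) (ha : 0 < g a) (hx : g x < 0) (hb : 0 < g b) :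
    ∃ u v, a < u ∧ u < v ∧ g u = 0 ∧ g v = 0 ∧ ∀ t ∈ Ioo u v, g t < 0 := by
  obtain ⟨u, hu, hgu, hleft⟩ := exists_zero_forall_neg_Ioc hax hg.continuousOn ha hx
  obtain ⟨w, hw, hgw, hright⟩ := exists_zero_forall_neg_Ioc (g := fun t ↦ g (-t))
    (neg_le_neg hxb) (by fun_prop) (by simpa using hb) (by simpa using hx)
  refine ⟨u, -w, hu.1, by linarith [hu.2, hw.2], hgu, hgw, fun t ht ↦ ?_⟩
  rcases le_or_gt t x with htx | htx
  · exact hleft t ⟨ht.1, htx⟩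
  · simpa using hright (-t) ⟨by linarith [ht.2], by linarith⟩

theorem im_eq_zero_or_eq_conj {w w' : ℂ} (hadd : (w + w').im = 0) (hmul : (w * w').im = 0) :
    (w.im = 0 ∧ w'.im = 0) ∨ (w.im ≠ 0 ∧ w' = conj w) := by
  simp only [Complex.add_im, Complex.mul_im] at hadd hmul
  by_cases h : w.im = 0
  · exact Or.inl ⟨h, by linarith⟩
  · have him : w'.im = -w.im := by linarith
    have hre : w.im * (w'.re - w.re) = 0 := by rw [him] at hmul; linear_combination hmul
    refine Or.inr ⟨h, Complex.ext ?_ (by simpa using him)⟩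
    simpa [sub_eq_zero, h] using hre

noncomputable def cubicRoots (a b c : ℝ) : Multiset ℂ :=
  (Cubic.map (algebraMap ℝ ℂ) ⟨1, a, b, c⟩).roots

theorem mem_cubicRoots {a b c : ℝ} {ζ : ℂ} :
    ζ ∈ cubicRoots a b c ↔ ζ ^ 3 + a * ζ ^ 2 + b * ζ + c = 0 := by
  rw [cubicRoots, Cubic.mem_roots_iff (Cubic.ne_zero_of_a_ne_zero (by simp [Cubic.map]))]
  simp [Cubic.map]

theorem ofReal_mem_cubicRoots {a b c x : ℝ} :
    (x : ℂ) ∈ cubicRoots a b c ↔ x ^ 3 + a * x ^ 2 + b * x + c = 0 := by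
  rw [mem_cubicRoots]; exact_mod_cast Iff.rfl

theorem card_cubicRoots (a b c : ℝ) : Multiset.card (cubicRoots a b c) = 3 :=
  (Cubic.splits_iff_card_roots (by simp)).1 (IsAlgClosed.splits _)

theorem cubicRoots_vieta {a b c : ℝ} {x y z : ℂ} (h : cubicRoots a b c = {x, y, z}) :
    (a : ℂ) = -(x + y + z) ∧ (b : ℂ) = x * y + x * z + y * z ∧ (c : ℂ) = -(x * y * z) := by
  have h' := Cubic.eq_sum_three_roots (P := ⟨1, a, b, c⟩) one_ne_zero h
  simp only [Cubic.map, Cubic.mk.injEq, map_one, one_mul] at h'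
  exact ⟨h'.2.1, h'.2.2.1, h'.2.2.2⟩

theorem cubicRoots_cases (a b c : ℝ) :
    (∃ z r s : ℝ, cubicRoots a b c = {(z : ℂ), (r : ℂ), (s : ℂ)} ∧
        a = -(z + r + s) ∧ b = z * r + z * s + r * s ∧ c = -(z * r * s)) ∨
    (∃ z α β : ℝ, β ≠ 0 ∧ cubicRoots a b c = {(z : ℂ), ⟨α, β⟩, ⟨α, -β⟩} ∧
        a = -(z + 2 * α) ∧ b = 2 * z * α + α ^ 2 + β ^ 2 ∧ c = -(z * (α ^ 2 + β ^ 2))) := by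
  obtain ⟨z, hz⟩ := exists_cubic_eq_zero a b c
  obtain ⟨t, ht⟩ := Multiset.exists_cons_of_mem (ofReal_mem_cubicRoots.2 hz)
  obtain ⟨w, w', rfl⟩ : ∃ w w', t = {w, w'} := Multiset.card_eq_two.1 <| by
    simpa [ht] using card_cubicRoots a b c
  have hroots : cubicRoots a b c = {(z : ℂ), w, w'} := ht
  obtain ⟨ha, hb, hc⟩ := cubicRoots_vieta hroots
  have hadd : w + w' = ((-a - z : ℝ) : ℂ) := by push_cast; linear_combination ha
  have hmul : w * w' = ((b + z * (a + z) : ℝ) : ℂ) := by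
    push_cast; linear_combination -hb - z * ha
  rcases im_eq_zero_or_eq_conj (by rw [hadd, Complex.ofReal_im]) (by rw [hmul, Complex.ofReal_im])
    with ⟨hw, hw'⟩ | ⟨hβ, rfl⟩
  · left
    rw [← Complex.re_add_im w, ← Complex.re_add_im w', hw, hw'] at hroots ha hb hc
    simp only [Complex.ofReal_zero, zero_mul, add_zero] at hroots ha hb hc
    exact ⟨z, w.re, w'.re, hroots, by exact_mod_cast ha, by exact_mod_cast hb,
      by exact_mod_cast hc⟩
  · right
    refine ⟨z, w.re, w.im, hβ, hroots, ?_, ?_, ?_⟩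
    · linear_combination (by simpa using congrArg Complex.re ha : a = _)
    · linear_combination (by simpa using congrArg Complex.re hb : b = _)
    · linear_combination (by simpa using congrArg Complex.re hc : c = _)

theorem routh_hurwitz_of_forall_re_neg {a b c : ℝ} (h : ∀ ζ ∈ cubicRoots a b c, ζ.re < 0) :
    0 < a ∧ 0 < c ∧ c < a * b := by
  rcases cubicRoots_cases a b c with ⟨z, r, s, hroots, rfl, rfl, rfl⟩ |
    ⟨z, α, β, hβ, hroots, rfl, rfl, rfl⟩
  all_goals
    rw [hroots] at h
    simp only [Multiset.insert_eq_cons, Multiset.forall_mem_cons, Multiset.mem_singleton,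
      forall_eq, Complex.ofReal_re] at h
  · obtain ⟨hz, hr, hs⟩ := h
    refine ⟨by linarith, by nlinarith [mul_pos (mul_pos_of_neg_of_neg hz hr) (neg_pos.2 hs)], ?_⟩
    nlinarith [mul_pos (mul_pos_of_neg_of_neg (add_neg hz hr) (add_neg hr hs))
      (neg_pos.2 (add_neg hs hz))]
  · obtain ⟨hz, hα, -⟩ := h
    have hβ2 : 0 < β ^ 2 := by positivity
    refine ⟨by linarith, by nlinarith [mul_pos (neg_pos.2 hz) (add_pos_of_nonneg_of_pos
      (sq_nonneg α) hβ2)], ?_⟩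
    nlinarith [mul_pos (neg_pos.2 hα) (add_pos_of_nonneg_of_pos (sq_nonneg (z + α)) hβ2)]

theorem exists_pos_mem_cubicRoots_of_neg {a b c : ℝ} (hc : c < 0) :
    ∃ x : ℝ, 0 < x ∧ (x : ℂ) ∈ cubicRoots a b c := by
  rcases cubicRoots_cases a b c with ⟨z, r, s, hroots, -, -, rfl⟩ |
    ⟨z, α, β, hβ, hroots, -, -, rfl⟩
  · rw [hroots]
    rcases lt_or_ge 0 z with hz | hz
    · exact ⟨z, hz, by simp⟩
    rcases lt_or_ge 0 r with hr | hr
    · exact ⟨r, hr, by simp⟩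
    refine ⟨s, ?_, by simp⟩
    by_contra! hs
    nlinarith [mul_nonneg (mul_nonneg_of_nonpos_of_nonpos hz hr) (neg_nonneg.2 hs)]
  · refine ⟨z, ?_, by simp [hroots]⟩
    by_contra! hz
    nlinarith [mul_nonneg (neg_nonneg.2 hz) (add_nonneg (sq_nonneg α) (sq_nonneg β))]

theorem mul_lt_of_pos_root {a b c x : ℝ} (ha : 0 < a) (hc : 0 ≤ c) (hx : 0 < x)
    (hroot : x ^ 3 + a * x ^ 2 + b * x + c = 0) : a * b < c := by
  have hb : b < 0 := by nlinarith [pow_pos hx 3, pow_pos hx 2]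
  nlinarith

theorem discr_nonneg_of_unstable_roots_real {a b c : ℝ} (hg : a * b < c)
    (h : ∀ ζ ∈ cubicRoots a b c, 0 < ζ.re → ζ.im = 0) : 0 ≤ (⟨1, a, b, c⟩ : Cubic ℝ).discr := by
  rcases cubicRoots_cases a b c with ⟨z, r, s, -, rfl, rfl, rfl⟩ |
    ⟨z, α, β, hβ, hroots, rfl, rfl, rfl⟩
  · unfold Cubic.discr
    linarith [sq_nonneg ((z - r) * (z - s) * (r - s))]
  · have hα : 0 < α := by
      by_contra! hα
      nlinarith [mul_nonneg (neg_nonneg.2 hα) (add_nonneg (sq_nonneg (z + α)) (sq_nonneg β))]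
    exact absurd (h ⟨α, β⟩ (by rw [hroots]; simp) hα) hβ

theorem discr_nonneg_Icc_of_Ioo {a b c : ℝ → ℝ} (ha : Continuous a) (hb : Continuous b)
    (hc : Continuous c) {u v : ℝ} (huv : u < v) (hneg : ∀ t ∈ Ioo u v, a t * b t < c t)
    (hreal : ∀ t ∈ Ioo u v, ∀ ζ ∈ cubicRoots (a t) (b t) (c t), 0 < ζ.re → ζ.im = 0) :
    ∀ t ∈ Icc u v, 0 ≤ (⟨1, a t, b t, c t⟩ : Cubic ℝ).discr := by
  have hclosed : IsClosed {t | 0 ≤ (⟨1, a t, b t, c t⟩ : Cubic ℝ).discr} :=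
    isClosed_le continuous_const (by simp only [Cubic.discr]; fun_prop)
  rw [← closure_Ioo huv.ne]
  exact fun t ht ↦ closure_minimal (fun t ht ↦ discr_nonneg_of_unstable_roots_real (hneg t ht)
    (hreal t ht)) hclosed ht

theorem eq_zero_of_mul_eq_of_discr_nonneg {a b c : ℝ} (ha : 0 < a) (hg : a * b = c)
    (hd : 0 ≤ (⟨1, a, b, c⟩ : Cubic ℝ).discr) (hc : 0 ≤ c) : c = 0 := by
  rcases cubicRoots_cases a b c with ⟨z, r, s, -, rfl, rfl, rfl⟩ |
    ⟨z, α, β, hβ, -, rfl, rfl, rfl⟩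
  · have hpair : (z + r) * (r + s) * (s + z) = 0 := by linear_combination -hg
    have hb : z * r + z * s + r * s ≤ 0 := by
      rcases mul_eq_zero.1 hpair with h | h
      · rcases mul_eq_zero.1 h with h | h
        · linear_combination (z + s) * h + sq_nonneg z
        · linear_combination (z + r) * h + sq_nonneg r
      · linear_combination (z + r) * h + sq_nonneg z
    nlinarith [mul_nonpos_of_nonneg_of_nonpos ha.le hb]
  · unfold Cubic.discr at hd
    have hβ2 : 0 < β ^ 2 := by positivity
    nlinarith [pow_pos (add_pos_of_nonneg_of_pos (sq_nonneg (z - α)) hβ2) 2]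

def Matrix.sumPrincipalMinors₂ {R : Type*} [CommRing R] (M : Matrix (Fin 3) (Fin 3) R) : R :=
  (M 1 1 * M 2 2 - M 1 2 * M 2 1) + (M 0 0 * M 2 2 - M 0 2 * M 2 0)
    + (M 0 0 * M 1 1 - M 0 1 * M 1 0)

theorem Matrix.charpoly_fin_three_s14 {R : Type*} [CommRing R] (M : Matrix (Fin 3) (Fin 3) R) :
    M.charpoly = X ^ 3 - C M.trace * X ^ 2 + C M.sumPrincipalMinors₂ * X - C M.det := by
  rw [Matrix.charpoly, Matrix.det_fin_three, Matrix.det_fin_three, Matrix.trace_fin_three]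
  simp only [charmatrix_apply, diagonal_apply, sumPrincipalMinors₂, Fin.reduceEq, ↓reduceIte,
    map_add, map_sub, map_mul]
  ring

theorem eigs_eq_cubicRoots (M : Matrix (Fin 3) (Fin 3) ℝ) :
    eigs M = cubicRoots (-M.trace) M.sumPrincipalMinors₂ (-M.det) := by
  rw [eigs, cubicRoots, Cubic.map_roots, M.charpoly_fin_three_s14]
  congr 2
  simp only [Cubic.toPoly, map_one, one_mul, map_neg]
  ring

theorem exists_pos_mem_eigs_of_det_pos {M : Matrix (Fin 3) (Fin 3) ℝ} (h : 0 < M.det) :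
    ∃ x : ℝ, 0 < x ∧ (x : ℂ) ∈ eigs M := by
  rw [eigs_eq_cubicRoots]
  exact exists_pos_mem_cubicRoots_of_neg (neg_neg_of_pos h)

section Jmat

variable (J : Matrix (Fin 3) (Fin 3) ℝ) (d₁ d₂ d₃ y : ℝ)

theorem Jmat_zero : Jmat J d₁ d₂ d₃ 0 = J := by
  simp [Jmat]

theorem neg_trace_Jmat : -(Jmat J d₁ d₂ d₃ y).trace = -J.trace + (d₁ + d₂ + d₃) * y := by
  rw [trace_fin_three, trace_fin_three]
  simp only [Jmat, Matrix.sub_apply, Matrix.smul_apply, smul_eq_mul, diagonal_apply_eq,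
    cons_val_zero, cons_val_one, cons_val]
  ring

theorem sumPrincipalMinors₂_Jmat : (Jmat J d₁ d₂ d₃ y).sumPrincipalMinors₂ =
    J.sumPrincipalMinors₂
      + -(d₁ * (J 1 1 + J 2 2) + d₂ * (J 0 0 + J 2 2) + d₃ * (J 0 0 + J 1 1)) * y
      + (d₁ * d₂ + d₂ * d₃ + d₃ * d₁) * y ^ 2 := by
  simp only [sumPrincipalMinors₂, Jmat, Matrix.sub_apply, Matrix.smul_apply, smul_eq_mul,
    diagonal_apply_eq, diagonal_apply_ne, ne_eq, Fin.reduceEq, not_false_eq_true, cons_val_zero,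
    cons_val_one, cons_val, mul_zero, sub_zero]
  ring

theorem det_Jmat : (Jmat J d₁ d₂ d₃ y).det =
    -(d₁ * d₂ * d₃) * y ^ 3 + (d₁ * d₂ * J 2 2 + d₂ * d₃ * J 0 0 + d₃ * d₁ * J 1 1) * y ^ 2
      + -(d₁ * (J 1 1 * J 2 2 - J 1 2 * J 2 1) + d₂ * (J 2 2 * J 0 0 - J 2 0 * J 0 2)
        + d₃ * (J 0 0 * J 1 1 - J 0 1 * J 1 0)) * y + J.det := by
  simp only [det_fin_three, Jmat, Matrix.sub_apply, Matrix.smul_apply, smul_eq_mul,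
    diagonal_apply_eq, diagonal_apply_ne, ne_eq, Fin.reduceEq, not_false_eq_true, cons_val_zero,
    cons_val_one, cons_val, mul_zero, sub_zero]
  ring

end Jmat

theorem eq_of_det_Jmat_eq_zero {J : Matrix (Fin 3) (Fin 3) ℝ} {d₁ d₂ d₃ : ℝ}
    (hd₁ : 0 < d₁) (hd₂ : 0 < d₂) (hd₃ : 0 < d₃)
    (hdet : ∀ y > 0, (Jmat J d₁ d₂ d₃ y).det ≤ 0) {u v : ℝ} (hu : 0 < u) (hv : 0 < v)
    (hdu : (Jmat J d₁ d₂ d₃ u).det = 0) (hdv : (Jmat J d₁ d₂ d₃ v).det = 0) : u = v := by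
  have hmax (t : ℝ) (ht : 0 < t) (h0 : (Jmat J d₁ d₂ d₃ t).det = 0) :
      IsLocalMax (fun y ↦ (Jmat J d₁ d₂ d₃ y).det) t :=
    Filter.eventually_of_mem (Ioi_mem_nhds ht) fun y hy ↦ (hdet y hy).trans_eq h0.symm
  have hmu := hmax u hu hdu
  have hmv := hmax v hv hdv
  simp only [det_Jmat] at hdu hdv hmu hmv
  exact eq_of_isLocalMax_cubic (neg_ne_zero.2 (by positivity)) hmu hmv hdu hdv

theorem exists_det_pos_of_turing_instability {J : Matrix (Fin 3) (Fin 3) ℝ} {d₁ d₂ d₃ : ℝ}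
    (hd₁ : 0 < d₁) (hd₂ : 0 < d₂) (hd₃ : 0 < d₃) (hJ : ∀ z ∈ eigs J, z.re < 0)
    (hreal : ∀ y > (0 : ℝ), ∀ z ∈ eigs (Jmat J d₁ d₂ d₃ y), 0 < z.re → z.im = 0)
    {y₀ : ℝ} (hy₀ : 0 < y₀) {ζ : ℂ} (hζ : ζ ∈ eigs (Jmat J d₁ d₂ d₃ y₀)) (hre : 0 < ζ.re) :
    ∃ y > 0, 0 < (Jmat J d₁ d₂ d₃ y).det := by
  by_contra! hdet
  set a : ℝ → ℝ := fun y ↦ -(Jmat J d₁ d₂ d₃ y).trace with ha_def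
  set b : ℝ → ℝ := fun y ↦ (Jmat J d₁ d₂ d₃ y).sumPrincipalMinors₂ with hb_def
  set c : ℝ → ℝ := fun y ↦ -(Jmat J d₁ d₂ d₃ y).det with hc_def
  have hroots (y : ℝ) : eigs (Jmat J d₁ d₂ d₃ y) = cubicRoots (a y) (b y) (c y) :=
    eigs_eq_cubicRoots _
  obtain ⟨ha₀, -, hg₀⟩ : 0 < a 0 ∧ 0 < c 0 ∧ c 0 < a 0 * b 0 :=
    routh_hurwitz_of_forall_re_neg (by rw [← hroots, Jmat_zero]; exact hJ)
  have ha (y : ℝ) (hy : 0 < y) : 0 < a y := by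
    simp only [ha_def, neg_trace_Jmat] at ha₀ ⊢
    nlinarith
  obtain ⟨ha_cont, hb_cont, hc_cont⟩ : Continuous a ∧ Continuous b ∧ Continuous c := by
    simp only [ha_def, hb_def, hc_def, Jmat, Matrix.sumPrincipalMinors₂]
    exact ⟨by fun_prop, by fun_prop, by fun_prop⟩
  have hgy₀ : a y₀ * b y₀ - c y₀ < 0 := by
    have hζ_real : ζ = (ζ.re : ℂ) := Complex.ext rfl (by simp [hreal y₀ hy₀ ζ hζ hre])
    rw [hroots, hζ_real, ofReal_mem_cubicRoots] at hζ
    linarith [mul_lt_of_pos_root (ha y₀ hy₀) (neg_nonneg.2 (hdet y₀ hy₀)) hre hζ]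
  have htendsto : Tendsto (fun y ↦ a y * b y - c y) atTop atTop := by
    simp only [ha_def, hb_def, hc_def, neg_trace_Jmat, sumPrincipalMinors₂_Jmat, det_Jmat,
      sub_neg_eq_add]
    refine tendsto_affine_mul_quadratic_add_cubic ?_
    linarith [show 0 < (d₁ + d₂) * (d₂ + d₃) * (d₃ + d₁) by positivity]
  obtain ⟨Y, hgY, hY⟩ := ((htendsto.eventually_gt_atTop 0).and (eventually_ge_atTop y₀)).exists
  obtain ⟨u, v, hu, huv, hgu, hgv, hneg⟩ := exists_Ioo_neg_zero_endpoints
    ((ha_cont.mul hb_cont).sub hc_cont) hy₀.le hY (sub_pos.2 hg₀) hgy₀ hgY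
  have hdisc := discr_nonneg_Icc_of_Ioo ha_cont hb_cont hc_cont huv
    (fun t ht ↦ sub_neg.1 (hneg t ht)) (fun t ht ↦ hroots t ▸ hreal t (hu.trans ht.1))
  have hdet_zero (t : ℝ) (ht : t ∈ Icc u v) (hgt : a t * b t - c t = 0) :
      (Jmat J d₁ d₂ d₃ t).det = 0 :=
    have ht₀ : 0 < t := hu.trans_le ht.1
    neg_eq_zero.1 <| eq_zero_of_mul_eq_of_discr_nonneg (ha t ht₀) (sub_eq_zero.1 hgt)
      (hdisc t ht) (neg_nonneg.2 (hdet t ht₀))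
  exact huv.ne <| eq_of_det_Jmat_eq_zero hd₁ hd₂ hd₃ hdet hu (hu.trans huv)
    (hdet_zero u (left_mem_Icc.2 huv.le) hgu) (hdet_zero v (right_mem_Icc.2 huv.le) hgv)

section CubicOnPositiveReals

variable {t₀ t₁ t₂ t₃ : ℝ}

theorem cubic_nonpos_of_sq_sub_nonpos (ht₃ : t₃ < 0) (ht₀ : t₀ < 0)
    (hD : t₂ ^ 2 - 3 * t₁ * t₃ ≤ 0) {y : ℝ} (hy : 0 ≤ y) :
    t₃ * y ^ 3 + t₂ * y ^ 2 + t₁ * y + t₀ ≤ 0 := by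
  have ht₁ : 0 ≤ t₁ * t₃ := by nlinarith [sq_nonneg t₂]
  have hQ : t₃ * y ^ 2 + t₂ * y + t₁ ≤ 0 := by nlinarith [sq_nonneg (2 * t₃ * y + t₂)]
  nlinarith

-- At the local maximum `y = (t₂ + s) / (-3 t₃)` the second summand vanishes.
theorem cubic_eq_of_sq_eq {s : ℝ} (hs : s ^ 2 = t₂ ^ 2 - 3 * t₁ * t₃) (y : ℝ) :
    27 * t₃ ^ 2 * (t₃ * y ^ 3 + t₂ * y ^ 2 + t₁ * y + t₀) =
      (2 * t₂ ^ 3 + 2 * s ^ 3 - 9 * t₁ * t₂ * t₃ + 27 * t₀ * t₃ ^ 2) +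
        (3 * t₃ * y + t₂ + s) ^ 2 * (3 * t₃ * y + t₂ - 2 * s) := by
  linear_combination (9 * t₃ * y + 3 * t₂) * hs

theorem exists_pos_cubic_pos_iff (ht₃ : t₃ < 0) (ht₀ : t₀ < 0) :
    (∃ y > 0, 0 < t₃ * y ^ 3 + t₂ * y ^ 2 + t₁ * y + t₀) ↔
      0 < t₂ ^ 2 - 3 * t₁ * t₃ ∧ 0 < t₂ + Real.sqrt (t₂ ^ 2 - 3 * t₁ * t₃) ∧
        0 < 2 * t₂ ^ 3 + 2 * Real.sqrt (t₂ ^ 2 - 3 * t₁ * t₃) ^ 3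
          - 9 * t₁ * t₂ * t₃ + 27 * t₀ * t₃ ^ 2 := by
  constructor
  · rintro ⟨y, hy, hpos⟩
    have hD : 0 < t₂ ^ 2 - 3 * t₁ * t₃ := by
      by_contra! hD
      exact hpos.not_ge (cubic_nonpos_of_sq_sub_nonpos ht₃ ht₀ hD hy.le)
    set s := Real.sqrt (t₂ ^ 2 - 3 * t₁ * t₃)
    have hs : s ^ 2 = t₂ ^ 2 - 3 * t₁ * t₃ := Real.sq_sqrt hD.le
    have hs₀ : 0 < s := Real.sqrt_pos.2 hD
    have hcrit : 0 < t₂ + s := by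
      by_contra! hcrit
      have ht₁ : t₁ ≤ 0 := by nlinarith
      nlinarith [mul_nonneg (mul_nonneg hy.le hy.le) hy.le, mul_nonneg hy.le hy.le]
    refine ⟨hD, hcrit, ?_⟩
    by_contra! hE
    have hid := cubic_eq_of_sq_eq (t₀ := t₀) hs y
    have ht₃2 : 0 < t₃ ^ 2 := by nlinarith
    rcases le_or_gt (3 * t₃ * y + t₂ - 2 * s) 0 with hW | hW
    · nlinarith [mul_pos ht₃2 hpos,
        mul_nonpos_of_nonneg_of_nonpos (sq_nonneg (3 * t₃ * y + t₂ + s)) hW]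
    · -- `y` lies left of both critical points, where the cubic decreases from `t₀ < 0`
      have hQ : t₃ * y ^ 2 + t₂ * y + t₁ ≤ 0 := by
        nlinarith [sq_nonneg (3 * t₃ * y + 3 * t₂), sq_nonneg (3 * t₃ * y + t₂ - 2 * s),
          sq_nonneg (3 * t₃ * y + t₂ + 2 * s)]
      nlinarith
  · rintro ⟨hD, hcrit, hE⟩
    set s := Real.sqrt (t₂ ^ 2 - 3 * t₁ * t₃)
    have hs : s ^ 2 = t₂ ^ 2 - 3 * t₁ * t₃ := Real.sq_sqrt hD.le
    set y := (t₂ + s) / (-(3 * t₃))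
    have hy : 3 * t₃ * y + t₂ + s = 0 := by
      have := ht₃.ne
      simp only [y]; field_simp; ring
    refine ⟨y, div_pos hcrit (by linarith), ?_⟩
    have hid := cubic_eq_of_sq_eq (t₀ := t₀) hs y
    rw [hy] at hid
    have ht₃2 : 0 < 27 * t₃ ^ 2 := by nlinarith
    exact pos_of_mul_pos_right (by linarith) ht₃2.le

end CubicOnPositiveReals

theorem turing_iff_explicit_conditions
    (J : Matrix (Fin 3) (Fin 3) ℝ) (d₁ d₂ d₃ : ℝ)
    (hd₁ : 0 < d₁) (hd₂ : 0 < d₂) (hd₃ : 0 < d₃)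
    (hJ : ∀ z ∈ eigs J, z.re < 0)
    (ta₀ ta₁ ta₂ ta₃ : ℝ)
    (hta₃ : ta₃ = -(d₁ * d₂ * d₃))
    (hta₂ : ta₂ = d₁ * d₂ * J 2 2 + d₂ * d₃ * J 0 0 + d₃ * d₁ * J 1 1)
    (hta₁ : ta₁ = -(d₁ * (J 1 1 * J 2 2 - J 1 2 * J 2 1)
      + d₂ * (J 2 2 * J 0 0 - J 2 0 * J 0 2)
      + d₃ * (J 0 0 * J 1 1 - J 0 1 * J 1 0)))
    (hta₀ : ta₀ = J.det) :
    ((∃ y > (0 : ℝ), ∃ z ∈ eigs (Jmat J d₁ d₂ d₃ y), 0 < z.re) ∧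
        (∀ y > (0 : ℝ), ∀ z ∈ eigs (Jmat J d₁ d₂ d₃ y), 0 < z.re → z.im = 0)) ↔
      (¬(∃ y > (0 : ℝ), ∃ z ∈ eigs (Jmat J d₁ d₂ d₃ y), z.im ≠ 0 ∧ 0 < z.re) ∧
        (0 < ta₂ ^ 2 - 3 * ta₁ * ta₃ ∧
         0 < ta₂ + Real.sqrt (ta₂ ^ 2 - 3 * ta₁ * ta₃) ∧
         0 < 2 * ta₂ ^ 3 + 2 * Real.sqrt (ta₂ ^ 2 - 3 * ta₁ * ta₃) ^ 3
              - 9 * ta₁ * ta₂ * ta₃ + 27 * ta₀ * ta₃ ^ 2)) := by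
  have hdet (y : ℝ) : (Jmat J d₁ d₂ d₃ y).det = ta₃ * y ^ 3 + ta₂ * y ^ 2 + ta₁ * y + ta₀ := by
    rw [det_Jmat, hta₃, hta₂, hta₁, hta₀]
  have hta₃_neg : ta₃ < 0 := by
    rw [hta₃]
    exact neg_neg_of_pos (by positivity)
  have hta₀_neg : ta₀ < 0 := by
    obtain ⟨-, hc, -⟩ := routh_hurwitz_of_forall_re_neg (eigs_eq_cubicRoots J ▸ hJ)
    linarith
  rw [← exists_pos_cubic_pos_iff hta₃_neg hta₀_neg]
  simp only [← hdet]
  constructor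
  · rintro ⟨⟨y, hy, ζ, hζ, hre⟩, hreal⟩
    exact ⟨fun ⟨y, hy, z, hz, him, hre⟩ ↦ him (hreal y hy z hz hre),
      exists_det_pos_of_turing_instability hd₁ hd₂ hd₃ hJ hreal hy hζ hre⟩
  · rintro ⟨hhopf, y, hy, hpos⟩
    obtain ⟨x, hx, hmem⟩ := exists_pos_mem_eigs_of_det_pos hpos
    refine ⟨⟨y, hy, x, hmem, by simpa using hx⟩, fun y hy z hz hre ↦ ?_⟩
    by_contra him
    exact hhopf ⟨y, hy, z, hz, him, hre⟩
end
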